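/- arXiv:1704.07288 — 2 statements merged into one kernel-verified Lean document; each statement's English description precedes it below -/
import Mathlib

section
/- Let τ : ℝ × ℝ → ℝ be a smooth function that vanishes nowhere and satisfies the bilinear equation τ·τ_{xt} − τ_x·τ_t + τ·τ_{xxxx} − 4·τ_x·τ_{xxx} + 3·(τ_{xx})² = 0 at every point. Then the function u := −2·∂_x(τ_x/τ) solves the Korteweg–de Vries equation u_t − 6·u·u_x + u_{xxx} = 0 at every point of ℝ × ℝ. -/
/-- Partial derivative in the first (space) variable. -/
noncomputable def pderivX (f : ℝ × ℝ → ℝ) : ℝ × ℝ → ℝ :=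
  fun p => deriv (fun x => f (x, p.2)) p.1

/-- Partial derivative in the second (time) variable. -/
noncomputable def pderivT (f : ℝ × ℝ → ℝ) : ℝ × ℝ → ℝ :=
  fun p => deriv (fun t => f (p.1, t)) p.2

noncomputable def D1 (f : ℝ × ℝ → ℝ) : ℝ × ℝ → ℝ := fun p => fderiv ℝ f p (1, 0)
noncomputable def D2 (f : ℝ × ℝ → ℝ) : ℝ × ℝ → ℝ := fun p => fderiv ℝ f p (0, 1)

lemma smoothD1 {f : ℝ × ℝ → ℝ} (hf : ContDiff ℝ (⊤ : ℕ∞) f) : ContDiff ℝ (⊤ : ℕ∞) (D1 f) :=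
  (hf.fderiv_right (by simp)).clm_apply contDiff_const

lemma smoothD2 {f : ℝ × ℝ → ℝ} (hf : ContDiff ℝ (⊤ : ℕ∞) f) : ContDiff ℝ (⊤ : ℕ∞) (D2 f) :=
  (hf.fderiv_right (by simp)).clm_apply contDiff_const

lemma pderivX_eq {f : ℝ × ℝ → ℝ} (hf : ContDiff ℝ (⊤ : ℕ∞) f) : pderivX f = D1 f := by
  funext p
  have h1 : HasDerivAt (fun x : ℝ => (x, p.2)) ((1 : ℝ), (0 : ℝ)) p.1 :=
    (hasDerivAt_id p.1).prodMk (hasDerivAt_const p.1 p.2)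
  have h2 : HasFDerivAt f (fderiv ℝ f (p.1, p.2)) (p.1, p.2) :=
    ((hf.differentiable (by simp)) (p.1, p.2)).hasFDerivAt
  have h3 := h2.comp_hasDerivAt p.1 h1
  exact h3.deriv

lemma pderivT_eq {f : ℝ × ℝ → ℝ} (hf : ContDiff ℝ (⊤ : ℕ∞) f) : pderivT f = D2 f := by
  funext p
  have h1 : HasDerivAt (fun t : ℝ => (p.1, t)) ((0 : ℝ), (1 : ℝ)) p.2 :=
    (hasDerivAt_const p.2 p.1).prodMk (hasDerivAt_id p.2)
  have h2 : HasFDerivAt f (fderiv ℝ f (p.1, p.2)) (p.1, p.2) :=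
    ((hf.differentiable (by simp)) (p.1, p.2)).hasFDerivAt
  have h3 := h2.comp_hasDerivAt p.2 h1
  exact h3.deriv

lemma D_comm {f : ℝ × ℝ → ℝ} (hf : ContDiff ℝ (⊤ : ℕ∞) f) : D1 (D2 f) = D2 (D1 f) := by
  funext p
  have hd1 : ∀ y, HasFDerivAt f (fderiv ℝ f y) y := fun y =>
    ((hf.differentiable (by simp)) y).hasFDerivAt
  have hd2 : DifferentiableAt ℝ (fderiv ℝ f) p :=
    ((hf.fderiv_right (m := (⊤ : ℕ∞)) (by simp)).differentiable (by simp)) p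
  have hsym := second_derivative_symmetric hd1 hd2.hasFDerivAt ((1:ℝ), (0:ℝ)) ((0:ℝ), (1:ℝ))
  have key : ∀ w : ℝ × ℝ, fderiv ℝ (fun q => fderiv ℝ f q w) p
      = (fderiv ℝ (fderiv ℝ f) p).flip w := by
    intro w
    have h := fderiv_clm_apply hd2 (differentiableAt_const w)
    simpa using h
  show fderiv ℝ (fun q => fderiv ℝ f q (0, 1)) p (1, 0)
      = fderiv ℝ (fun q => fderiv ℝ f q (1, 0)) p (0, 1)
  rw [key, key]
  simpa using hsym


def HD (v : ℝ × ℝ) (f : ℝ × ℝ → ℝ) (p : ℝ × ℝ) (a : ℝ) : Prop :=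
  ∃ L : ℝ × ℝ →L[ℝ] ℝ, HasFDerivAt f L p ∧ L v = a

namespace HD
variable {v p : ℝ × ℝ} {A B : ℝ × ℝ → ℝ} {a b : ℝ}

lemma congr (h : HD v A p a) (e : a = b) : HD v A p b := e ▸ h

lemma add (hA : HD v A p a) (hB : HD v B p b) : HD v (fun q => A q + B q) p (a + b) := by
  obtain ⟨LA, hLA, ha⟩ := hA; obtain ⟨LB, hLB, hb⟩ := hB
  exact ⟨LA + LB, hLA.add hLB, by simp [ha, hb]⟩

lemma sub (hA : HD v A p a) (hB : HD v B p b) : HD v (fun q => A q - B q) p (a - b) := by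
  obtain ⟨LA, hLA, ha⟩ := hA; obtain ⟨LB, hLB, hb⟩ := hB
  exact ⟨LA - LB, hLA.sub hLB, by simp [ha, hb]⟩

lemma mul (hA : HD v A p a) (hB : HD v B p b) :
    HD v (fun q => A q * B q) p (a * B p + A p * b) := by
  obtain ⟨LA, hLA, ha⟩ := hA; obtain ⟨LB, hLB, hb⟩ := hB
  refine ⟨A p • LB + B p • LA, hLA.mul hLB, ?_⟩
  simp [ha, hb, smul_eq_mul]; ring

lemma const_mul (hA : HD v A p a) (c : ℝ) : HD v (fun q => c * A q) p (c * a) := by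
  obtain ⟨LA, hLA, ha⟩ := hA
  exact ⟨c • LA, hLA.const_mul c, by simp [ha, smul_eq_mul]⟩

lemma sq (h : HD v A p a) : HD v (fun q => A q ^ 2) p (2 * A p * a) := by
  have h2 := h.mul h
  have e : (fun q => A q * A q) = fun q => A q ^ 2 := by funext q; ring
  rw [e] at h2; exact h2.congr (by ring)

lemma cube (h : HD v A p a) : HD v (fun q => A q ^ 3) p (3 * A p ^ 2 * a) := by
  have h2 := (h.sq).mul h
  have e : (fun q => A q ^ 2 * A q) = fun q => A q ^ 3 := by funext q; ring
  rw [e] at h2; exact h2.congr (by ring)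

lemma pow4 (h : HD v A p a) : HD v (fun q => A q ^ 4) p (4 * A p ^ 3 * a) := by
  have h2 := (h.cube).mul h
  have e : (fun q => A q ^ 3 * A q) = fun q => A q ^ 4 := by funext q; ring
  rw [e] at h2; exact h2.congr (by ring)

lemma div (hA : HD v A p a) (hB : HD v B p b) (hB0 : B p ≠ 0) :
    HD v (fun q => A q / B q) p ((a * B p - A p * b) / B p ^ 2) := by
  obtain ⟨LA, hLA, ha⟩ := hA; obtain ⟨LB, hLB, hb⟩ := hB
  have hinv := (hasFDerivAt_inv hB0).comp p hLB
  have hmul := hLA.mul hinv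
  have e : (fun y => A y * (B y)⁻¹) = fun y => A y / B y := by
    funext y; rw [div_eq_mul_inv]
  rw [show ((fun x => x⁻¹) ∘ B) = fun y => (B y)⁻¹ from rfl, show (A * fun y => (B y)⁻¹) = fun y => A y / B y from e] at hmul
  refine ⟨_, hmul, ?_⟩
  simp [ha, hb, smul_eq_mul, ContinuousLinearMap.comp_apply]
  field_simp
  ring

lemma d1 {f : ℝ × ℝ → ℝ} (h : HD (1, 0) f p a) : D1 f p = a := by
  obtain ⟨L, hL, ha⟩ := h
  show fderiv ℝ f p (1, 0) = a
  rw [hL.fderiv]; exact ha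

lemma d2 {f : ℝ × ℝ → ℝ} (h : HD (0, 1) f p a) : D2 f p = a := by
  obtain ⟨L, hL, ha⟩ := h
  show fderiv ℝ f p (0, 1) = a
  rw [hL.fderiv]; exact ha

end HD

lemma hd1_atom {f : ℝ × ℝ → ℝ} (hf : ContDiff ℝ (⊤ : ℕ∞) f) (p : ℝ × ℝ) : HD (1, 0) f p (D1 f p) :=
  ⟨_, ((hf.differentiable (by simp)) p).hasFDerivAt, rfl⟩

lemma hd2_atom {f : ℝ × ℝ → ℝ} (hf : ContDiff ℝ (⊤ : ℕ∞) f) (p : ℝ × ℝ) : HD (0, 1) f p (D2 f p) :=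
  ⟨_, ((hf.differentiable (by simp)) p).hasFDerivAt, rfl⟩

/-- If `τ` is a smooth nowhere-vanishing function satisfying Hirota's bilinear
equation `τ τ_{xt} - τ_x τ_t + τ τ_{xxxx} - 4 τ_x τ_{xxx} + 3 τ_{xx}² = 0`,
then `u := -2 ∂_x (τ_x / τ)` solves KdV: `u_t - 6 u u_x + u_{xxx} = 0`. -/
theorem tau_function_gives_KdV_solution
    (τ : ℝ × ℝ → ℝ) (hτ : ContDiff ℝ (⊤ : ℕ∞) τ) (hτ0 : ∀ p, τ p ≠ 0)
    (hbil : ∀ p : ℝ × ℝ,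
      τ p * pderivX (pderivT τ) p - pderivX τ p * pderivT τ p
        + τ p * pderivX (pderivX (pderivX (pderivX τ))) p
        - 4 * pderivX τ p * pderivX (pderivX (pderivX τ)) p
        + 3 * (pderivX (pderivX τ) p) ^ 2 = 0)
    (u : ℝ × ℝ → ℝ)
    (hu : u = fun p => -2 * pderivX (fun q => pderivX τ q / τ q) p) :
    ∀ p : ℝ × ℝ,
      pderivT u p - 6 * u p * pderivX u p + pderivX (pderivX (pderivX u)) p = 0 := by
  have hs1 : ContDiff ℝ (⊤ : ℕ∞) (D1 τ) := smoothD1 hτ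
  have hs2 : ContDiff ℝ (⊤ : ℕ∞) (D1 (D1 τ)) := smoothD1 hs1
  have hs3 := smoothD1 hs2
  have hs4 := smoothD1 hs3
  have hsg1 : ContDiff ℝ (⊤ : ℕ∞) (D2 τ) := smoothD2 hτ
  have hsg2 := smoothD1 hsg1
  have hbil' : ∀ p : ℝ × ℝ, τ p * D1 (D2 τ) p - D1 τ p * D2 τ p + τ p * D1 (D1 (D1 (D1 τ))) p - 4 * D1 τ p * D1 (D1 (D1 τ)) p + 3 * D1 (D1 τ) p ^ 2 = 0 := by
    intro p
    have h := hbil p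
    rw [pderivT_eq hτ, pderivX_eq hτ, pderivX_eq hs1, pderivX_eq hs2, pderivX_eq hs3,
      pderivX_eq hsg1] at h
    exact h
  have hbilfun : (fun p : ℝ × ℝ => τ p * D1 (D2 τ) p - D1 τ p * D2 τ p + τ p * D1 (D1 (D1 (D1 τ))) p - 4 * D1 τ p * D1 (D1 (D1 τ)) p + 3 * D1 (D1 τ) p ^ 2) = fun _ => (0:ℝ) := funext hbil'
  have hR2 : ∀ p : ℝ × ℝ, 1 * τ p * D1 (D1 (D2 τ)) p + (-1) * D1 (D1 τ) p * D2 τ p + (-3) * D1 τ p * D1 (D1 (D1 (D1 τ))) p + 1 * τ p * D1 (D1 (D1 (D1 (D1 τ)))) p + 2 * D1 (D1 τ) p * D1 (D1 (D1 τ)) p = 0 := by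
    intro p
    have a0 := hd1_atom hτ p
    have a1 := hd1_atom hs1 p
    have a2 := hd1_atom hs2 p
    have a3 := hd1_atom hs3 p
    have a4 := hd1_atom hs4 p
    have ag1 := hd1_atom hsg1 p
    have ag2 := hd1_atom hsg2 p

    have htree : D1 (fun p : ℝ × ℝ => τ p * D1 (D2 τ) p - D1 τ p * D2 τ p + τ p * D1 (D1 (D1 (D1 τ))) p - 4 * D1 τ p * D1 (D1 (D1 τ)) p + 3 * D1 (D1 τ) p ^ 2) p = 1 * τ p * D1 (D1 (D2 τ)) p + (-1) * D1 (D1 τ) p * D2 τ p + (-3) * D1 τ p * D1 (D1 (D1 (D1 τ))) p + 1 * τ p * D1 (D1 (D1 (D1 (D1 τ)))) p + 2 * D1 (D1 τ) p * D1 (D1 (D1 τ)) p :=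
      HD.d1 (HD.congr (((((a0.mul ag2).sub (a1.mul ag1)).add (a0.mul a4)).sub
        ((a1.const_mul 4).mul a3)).add ((a2.sq).const_mul 3)) (by ring))
    rw [hbilfun] at htree
    have hz : D1 (fun _ : ℝ × ℝ => (0:ℝ)) p = 0 := by simp [D1]
    exact (hz.symm.trans htree).symm
  have hsq : ContDiff ℝ (⊤ : ℕ∞) (fun q => D1 τ q / τ q) := hs1.div hτ hτ0
  have hu2 : u = fun p : ℝ × ℝ => ((-2) * τ p * D1 (D1 τ) p + 2 * D1 τ p ^ 2) / τ p ^ 2 := by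
    rw [hu, pderivX_eq hτ, pderivX_eq hsq]
    funext p
    have hq := HD.d1 ((hd1_atom hs1 p).div (hd1_atom hτ p) (hτ0 p))
    rw [hq]
    have h0 := hτ0 p
    field_simp
    ring
  have hUsm : ContDiff ℝ (⊤ : ℕ∞) (fun p : ℝ × ℝ => ((-2) * τ p * D1 (D1 τ) p + 2 * D1 τ p ^ 2) / τ p ^ 2) := (((contDiff_const.mul hτ).mul hs2).add (contDiff_const.mul (hs1.pow 2))).div (hτ.pow 2) (fun x => pow_ne_zero 2 (hτ0 x))
  have hV1 : D1 (fun p : ℝ × ℝ => ((-2) * τ p * D1 (D1 τ) p + 2 * D1 τ p ^ 2) / τ p ^ 2) = fun p : ℝ × ℝ => (6 * τ p * D1 τ p * D1 (D1 τ) p + (-2) * τ p ^ 2 * D1 (D1 (D1 τ)) p + (-4) * D1 τ p ^ 3) / τ p ^ 3 := by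
    funext p
    have a0 := hd1_atom hτ p
    have a1 := hd1_atom hs1 p
    have a2 := hd1_atom hs2 p
    have a3 := hd1_atom hs3 p
    have a4 := hd1_atom hs4 p
    have ag1 := hd1_atom hsg1 p
    have ag2 := hd1_atom hsg2 p

    have h0 := hτ0 p
    exact HD.d1 (HD.congr ((((a0.const_mul (-2)).mul a2).add ((a1.sq).const_mul (2))).div (a0.sq) (pow_ne_zero 2 (hτ0 p))) (by field_simp; ring))
  have hV1sm : ContDiff ℝ (⊤ : ℕ∞) (fun p : ℝ × ℝ => (6 * τ p * D1 τ p * D1 (D1 τ) p + (-2) * τ p ^ 2 * D1 (D1 (D1 τ)) p + (-4) * D1 τ p ^ 3) / τ p ^ 3) := (((((contDiff_const.mul hτ).mul hs1).mul hs2).add ((contDiff_const.mul (hτ.pow 2)).mul hs3)).add (contDiff_const.mul (hs1.pow 3))).div (hτ.pow 3) (fun x => pow_ne_zero 3 (hτ0 x))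
  have hV2 : D1 (fun p : ℝ × ℝ => (6 * τ p * D1 τ p * D1 (D1 τ) p + (-2) * τ p ^ 2 * D1 (D1 (D1 τ)) p + (-4) * D1 τ p ^ 3) / τ p ^ 3) = fun p : ℝ × ℝ => ((-24) * τ p * D1 τ p ^ 2 * D1 (D1 τ) p + 6 * τ p ^ 2 * D1 (D1 τ) p ^ 2 + 8 * τ p ^ 2 * D1 τ p * D1 (D1 (D1 τ)) p + (-2) * τ p ^ 3 * D1 (D1 (D1 (D1 τ))) p + 12 * D1 τ p ^ 4) / τ p ^ 4 := by
    funext p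
    have a0 := hd1_atom hτ p
    have a1 := hd1_atom hs1 p
    have a2 := hd1_atom hs2 p
    have a3 := hd1_atom hs3 p
    have a4 := hd1_atom hs4 p
    have ag1 := hd1_atom hsg1 p
    have ag2 := hd1_atom hsg2 p

    have h0 := hτ0 p
    exact HD.d1 (HD.congr ((((((a0.const_mul (6)).mul a1).mul a2).add (((a0.sq).const_mul (-2)).mul a3)).add ((a1.cube).const_mul (-4))).div (a0.cube) (pow_ne_zero 3 (hτ0 p))) (by field_simp; ring))
  have hV2sm : ContDiff ℝ (⊤ : ℕ∞) (fun p : ℝ × ℝ => ((-24) * τ p * D1 τ p ^ 2 * D1 (D1 τ) p + 6 * τ p ^ 2 * D1 (D1 τ) p ^ 2 + 8 * τ p ^ 2 * D1 τ p * D1 (D1 (D1 τ)) p + (-2) * τ p ^ 3 * D1 (D1 (D1 (D1 τ))) p + 12 * D1 τ p ^ 4) / τ p ^ 4) := (((((((contDiff_const.mul hτ).mul (hs1.pow 2)).mul hs2).add ((contDiff_const.mul (hτ.pow 2)).mul (hs2.pow 2))).add (((contDiff_const.mul (hτ.pow 2)).mul hs1).mul hs3)).add ((contDiff_const.mul (hτ.pow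 3)).mul hs4)).add (contDiff_const.mul (hs1.pow 4))).div (hτ.pow 4) (fun x => pow_ne_zero 4 (hτ0 x))
  have hV3 : D1 (fun p : ℝ × ℝ => ((-24) * τ p * D1 τ p ^ 2 * D1 (D1 τ) p + 6 * τ p ^ 2 * D1 (D1 τ) p ^ 2 + 8 * τ p ^ 2 * D1 τ p * D1 (D1 (D1 τ)) p + (-2) * τ p ^ 3 * D1 (D1 (D1 (D1 τ))) p + 12 * D1 τ p ^ 4) / τ p ^ 4) = fun p : ℝ × ℝ => (120 * τ p * D1 τ p ^ 3 * D1 (D1 τ) p + (-60) * τ p ^ 2 * D1 τ p * D1 (D1 τ) p ^ 2 + (-40) * τ p ^ 2 * D1 τ p ^ 2 * D1 (D1 (D1 τ)) p + 20 * τ p ^ 3 * D1 (D1 τ) p * D1 (D1 (D1 τ)) p + 10 * τ p ^ 3 * D1 τ p * D1 (D1 (D1 (D1 τ))) p + (-2) * τ p ^ 4 * D1 (D1 (D1 (D1 (D1 τ)))) p + (-48) * D1 τ p ^ 5) / τ p ^ 5 := by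
    funext p
    have a0 := hd1_atom hτ p
    have a1 := hd1_atom hs1 p
    have a2 := hd1_atom hs2 p
    have a3 := hd1_atom hs3 p
    have a4 := hd1_atom hs4 p
    have ag1 := hd1_atom hsg1 p
    have ag2 := hd1_atom hsg2 p

    have h0 := hτ0 p
    exact HD.d1 (HD.congr ((((((((a0.const_mul (-24)).mul (a1.sq)).mul a2).add (((a0.sq).const_mul (6)).mul (a2.sq))).add ((((a0.sq).const_mul (8)).mul a1).mul a3)).add (((a0.cube).const_mul (-2)).mul a4)).add ((a1.pow4).const_mul (12))).div (a0.pow4) (pow_ne_zero 4 (hτ0 p))) (by field_simp; ring))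
  have hW : D2 (fun p : ℝ × ℝ => ((-2) * τ p * D1 (D1 τ) p + 2 * D1 τ p ^ 2) / τ p ^ 2) = fun p : ℝ × ℝ => (2 * τ p * D1 (D1 τ) p * D2 τ p + (-2) * τ p ^ 2 * D1 (D1 (D2 τ)) p + 4 * τ p * D1 τ p * D1 (D2 τ) p + (-4) * D1 τ p ^ 2 * D2 τ p) / τ p ^ 3 := by
    funext p
    have b0 := hd2_atom hτ p
    have b1 := (hd2_atom hs1 p).congr (congrFun (D_comm hτ) p).symm
    have b2 := (hd2_atom hs2 p).congr
      (congrFun ((congrArg D1 (D_comm hτ)).trans (D_comm hs1)) p).symm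

    have h0 := hτ0 p
    exact HD.d2 (HD.congr ((((b0.const_mul (-2)).mul b2).add ((b1.sq).const_mul (2))).div (b0.sq) (pow_ne_zero 2 (hτ0 p))) (by field_simp; ring))
  intro p
  rw [hu2, pderivX_eq hUsm, hV1, pderivX_eq hV1sm, hV2, pderivX_eq hV2sm, hV3,
    pderivT_eq hUsm, hW]
  have h0 := hτ0 p
  have hb := hbil' p
  have hr := hR2 p
  field_simp
  linear_combination (4 * τ p ^ 2 * D1 τ p) * hb - (2 * τ p ^ 3) * hr
end

section
/- Let n ≥ 1, let λ_1, …, λ_n be reals, and set Λ := diag(λ_1, …, λ_n). Let P be an n×n real matrix such that I + P is invertible, and set C := (I − P)(I + P)⁻¹. Denote by cosh Λ, sinh Λ, e^Λ, e^{−2Λ} the diagonal matrices with diagonal entries cosh λ_i, sinh λ_i, e^{λ_i}, e^{−2λ_i} respectively. Then det(cosh Λ + C·sinh Λ) = 2^{−n}·det(I + C)·(∏_{i=1}^n e^{λ_i})·det(I + P·e^{−2Λ}). -/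
/-!
Writing `cosh Λ = (e^Λ + e^{-Λ})/2` and `sinh Λ = (e^Λ - e^{-Λ})/2` gives
`cosh Λ + C sinh Λ = ((1 + C) e^Λ + (1 - C) e^{-Λ})/2`. For the Cayley transform
`C = (1 - P)(1 + P)⁻¹` one has `(1 + C) P = 1 - C`, and `e^{-Λ} = e^{-2Λ} e^Λ`, so the bracket
factors as `(1 + C)(1 + P e^{-2Λ}) e^Λ`; taking determinants finishes the proof.
-/

open Matrix Real

namespace Matrix

variable {ι : Type*} [Fintype ι] [DecidableEq ι]

theorem one_add_cayley_mul_self {R : Type*} [CommRing R] {P : Matrix ι ι R}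
    (hP : IsUnit (1 + P).det) :
    (1 + (1 - P) * (1 + P)⁻¹) * P = 1 - (1 - P) * (1 + P)⁻¹ := by
  have hcomm : Commute (1 + P)⁻¹ P := Commute.units_inv_left (u := nonsingInvUnit (1 + P) hP)
    ((Commute.one_left P).add_left (Commute.refl P))
  calc (1 + (1 - P) * (1 + P)⁻¹) * P = P + (1 - P) * ((1 + P)⁻¹ * P) := by noncomm_ring
    _ = 1 - (1 - P) * (1 + P)⁻¹ + (1 - P) * ((1 + P) * (1 + P)⁻¹ - 1) := by
        rw [hcomm.eq]; noncomm_ring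
    _ = 1 - (1 - P) * (1 + P)⁻¹ := by rw [mul_nonsing_inv _ hP, sub_self, mul_zero, add_zero]

theorem diagonal_cosh_add_mul_diagonal_sinh (lam : ι → ℝ) (C : Matrix ι ι ℝ) :
    diagonal (fun i => cosh (lam i)) + C * diagonal (fun i => sinh (lam i)) =
      (2 : ℝ)⁻¹ • ((1 + C) * diagonal (fun i => exp (lam i)) +
        (1 - C) * diagonal (fun i => exp (-lam i))) := by
  have hcosh : diagonal (fun i => cosh (lam i)) =
      (2 : ℝ)⁻¹ • (diagonal (fun i => exp (lam i)) + diagonal (fun i => exp (-lam i))) := by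
    rw [diagonal_add, ← diagonal_smul]
    congr 1; funext i; simp only [cosh_eq, Pi.smul_apply, smul_eq_mul]; ring
  have hsinh : diagonal (fun i => sinh (lam i)) =
      (2 : ℝ)⁻¹ • (diagonal (fun i => exp (lam i)) - diagonal (fun i => exp (-lam i))) := by
    rw [diagonal_sub, ← diagonal_smul]
    congr 1; funext i; simp only [sinh_eq, Pi.smul_apply, smul_eq_mul]; ring
  rw [hcosh, hsinh, Matrix.mul_smul, ← smul_add]
  congr 1
  noncomm_ring

theorem diagonal_exp_neg_eq_mul (lam : ι → ℝ) :
    diagonal (fun i => exp (-lam i)) =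
      diagonal (fun i => exp (-2 * lam i)) * diagonal (fun i => exp (lam i)) := by
  rw [diagonal_mul_diagonal]
  congr 1; funext i
  rw [← exp_add]; ring_nf

end Matrix

theorem det_cosh_add_cayley_sinh_general
    (n : ℕ) (lam : Fin n → ℝ)
    (P : Matrix (Fin n) (Fin n) ℝ) (hP : IsUnit (1 + P).det)
    (C : Matrix (Fin n) (Fin n) ℝ) (hC : C = (1 - P) * (1 + P)⁻¹) :
    (Matrix.diagonal (fun i => Real.cosh (lam i)) +
        C * Matrix.diagonal (fun i => Real.sinh (lam i))).det =
      (2 : ℝ) ^ (-(n : ℤ)) * (1 + C).det * (∏ i, Real.exp (lam i)) *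
        (1 + P * Matrix.diagonal (fun i => Real.exp (-2 * lam i))).det := by
  have hCP : (1 + C) * P = 1 - C := hC ▸ one_add_cayley_mul_self hP
  have hfactor : diagonal (fun i => cosh (lam i)) + C * diagonal (fun i => sinh (lam i)) =
      (2 : ℝ)⁻¹ • ((1 + C) * (1 + P * diagonal (fun i => exp (-2 * lam i))) *
        diagonal (fun i => exp (lam i))) := by
    rw [diagonal_cosh_add_mul_diagonal_sinh, diagonal_exp_neg_eq_mul, ← hCP]
    noncomm_ring
  rw [hfactor, det_smul, det_mul, det_mul, det_diagonal, Fintype.card_fin, _root_.zpow_neg,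
    zpow_natCast, inv_pow]
  ring

/-- The determinant identity
`det(cosh Λ + C sinh Λ) = 2^{−n} det(I + C) (∏ e^{λ_i}) det(I + P e^{−2Λ})`,
where `Λ = diag(λ_1,…,λ_n)`, `I + P` is invertible and `C = (I − P)(I + P)⁻¹`. -/
theorem det_cosh_add_cayley_sinh
    (n : ℕ) (hn : 1 ≤ n) (lam : Fin n → ℝ)
    (P : Matrix (Fin n) (Fin n) ℝ) (hP : IsUnit (1 + P).det)
    (C : Matrix (Fin n) (Fin n) ℝ) (hC : C = (1 - P) * (1 + P)⁻¹) :
    (Matrix.diagonal (fun i => Real.cosh (lam i)) +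
        C * Matrix.diagonal (fun i => Real.sinh (lam i))).det =
      (2 : ℝ) ^ (-(n : ℤ)) * (1 + C).det * (∏ i, Real.exp (lam i)) *
        (1 + P * Matrix.diagonal (fun i => Real.exp (-2 * lam i))).det :=
  det_cosh_add_cayley_sinh_general n lam P hP C hC
end
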